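/- Let X be a finite set with |X| = m, and let S be a finite family of subsets of X, each of size exactly 3, such that every x ∈ X belongs to at least one s ∈ S. Let G be the graph on vertex set X ⊕ S ⊕ {r} with edges {r, s} for every s ∈ S, and {x, s} for every x ∈ X and s ∈ S with x ∈ s (and no other edges); let dG denote the shortest-path distance in G. Consider assignments E consisting of a vertex E₁(x) for each x ∈ X and a vertex E₂(s) for each s ∈ S such that every vertex in the image of E₁ is also in the image of E₂ (inclusion constraint A₁ ⊑ A₂), with cost(E) = ∑_{x∈X} dG(x, E₁(x)) + ∑_{s∈S} dG(r, E₂(s)). Then for every natural number p: there exists such an assignment E with cost(E) ≤ m + p if and only if there exists S' ⊆ S with ⋃S' = X and |S'| ≤ p. (Cost correspondence in the PTAS reduction from minimum set cover by 3-sets establishing APX-hardness of computing an optimal repair under the constraint A₁ ⊑ A₂.) -/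

import Mathlib

/-- Base relation of the set-cover graph: the root `r` is related to every set vertex
`s ∈ S`, and an element vertex `x` is related to a set vertex `s` iff `x ∈ s`. -/
def CoverRel {X : Type*} (S : Finset (Finset X)) :
    (X ⊕ {s : Finset X // s ∈ S} ⊕ Unit) →
      (X ⊕ {s : Finset X // s ∈ S} ⊕ Unit) → Prop
  | Sum.inr (Sum.inr _), Sum.inr (Sum.inl _) => True
  | Sum.inl x, Sum.inr (Sum.inl s) => x ∈ s.1
  | _, _ => False

/-- The set-cover graph on vertices `X ⊕ S ⊕ {r}` with edges `{r, s}` for `s ∈ S` and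
`{x, s}` for `x ∈ s`. -/
def CoverGraph {X : Type*} (S : Finset (Finset X)) :
    SimpleGraph (X ⊕ {s : Finset X // s ∈ S} ⊕ Unit) :=
  SimpleGraph.fromRel (CoverRel S)


/-!
Given an assignment, let `A` be the elements sent to a set containing them and `D` the
elements sent to themselves; every other element travels distance at least 2. The inclusion
constraint puts the set vertices `E₁(A)` and the element vertices of `D` into the image of `E₂`,
at distance at least 1 and 2 from the root. So the cost is at least `2m - |A| + |E₁(A)|`, while
`E₁(A)` plus one set per element outside `A` is a cover of size at most `|E₁(A)| + m - |A|`.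
Conversely, a cover `S'` yields the assignment sending each element to a set of `S'` containing
it and each `s ∈ S'` to itself, of cost `m + |S'|`.
-/

open Finset SimpleGraph

lemma Finset.sum_image_le_sum_of_range_subset {ι κ V : Type*} [Fintype ι] [Fintype κ]
    [DecidableEq V] (c : V → ℕ) {f : ι → V} {g : κ → V} (h : Set.range f ⊆ Set.range g) :
    ∑ v ∈ univ.image f, c v ≤ ∑ j, c (g j) :=
  calc ∑ v ∈ univ.image f, c v ≤ ∑ v ∈ univ.image g, c v := by
        refine sum_le_sum_of_subset fun v hv ↦ ?_
        simpa using h (by simpa using hv)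
    _ ≤ ∑ j, c (g j) := sum_image_le_of_nonneg fun _ _ ↦ Nat.zero_le _

namespace CoverGraph

variable {X : Type*} {S : Finset (Finset X)}

@[simp]
lemma not_adj_inl_inl (x y : X) : ¬ (CoverGraph S).Adj (Sum.inl x) (Sum.inl y) := by
  simp [CoverGraph, CoverRel]

@[simp]
lemma adj_inl_set_iff (x : X) (s : {s : Finset X // s ∈ S}) :
    (CoverGraph S).Adj (Sum.inl x) (Sum.inr (Sum.inl s)) ↔ x ∈ s.1 := by
  simp [CoverGraph, CoverRel]

@[simp]
lemma not_adj_inl_root (x : X) : ¬ (CoverGraph S).Adj (Sum.inl x) (Sum.inr (Sum.inr ())) := by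
  simp [CoverGraph, CoverRel]

@[simp]
lemma adj_root_set (s : {s : Finset X // s ∈ S}) :
    (CoverGraph S).Adj (Sum.inr (Sum.inr ())) (Sum.inr (Sum.inl s)) := by
  simp [CoverGraph, CoverRel]

-- `SimpleGraph.dist` is `0` between unreachable vertices, so the distance lower bounds need this.
lemma connected (hcov : ∀ x : X, ∃ s ∈ S, x ∈ s) : (CoverGraph S).Connected := by
  have reach_root : ∀ v, (CoverGraph S).Reachable v (Sum.inr (Sum.inr ())) := by
    rintro (x | s | ⟨⟩)
    · obtain ⟨s, hs, hxs⟩ := hcov x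
      exact ((adj_inl_set_iff x ⟨s, hs⟩).2 hxs).reachable.trans (adj_root_set _).symm.reachable
    · exact (adj_root_set s).symm.reachable
    · rfl
  exact ⟨fun u v ↦ (reach_root u).trans (reach_root v).symm⟩

lemma dist_inl_set {x : X} {s : {s : Finset X // s ∈ S}} (hx : x ∈ s.1) :
    (CoverGraph S).dist (Sum.inl x) (Sum.inr (Sum.inl s)) = 1 :=
  dist_eq_one_iff_adj.2 ((adj_inl_set_iff x s).2 hx)

lemma dist_root_set (s : {s : Finset X // s ∈ S}) :
    (CoverGraph S).dist (Sum.inr (Sum.inr ())) (Sum.inr (Sum.inl s)) = 1 :=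
  dist_eq_one_iff_adj.2 (adj_root_set s)

lemma two_le_dist_inl (hcov : ∀ x : X, ∃ s ∈ S, x ∈ s) {x : X}
    {v : X ⊕ {s : Finset X // s ∈ S} ⊕ Unit} (hxv : v ≠ Sum.inl x)
    (hset : ∀ s, v = Sum.inr (Sum.inl s) → x ∉ s.1) :
    2 ≤ (CoverGraph S).dist (Sum.inl x) v := by
  refine (connected hcov).one_lt_dist_of_ne_of_not_adj hxv.symm ?_
  rcases v with y | s | ⟨⟩
  · exact not_adj_inl_inl x y
  · exact (adj_inl_set_iff x s).not.2 (hset s rfl)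
  · exact not_adj_inl_root x

lemma card_add_two_mul_card_le_sum_dist_root (hcov : ∀ x : X, ∃ s ∈ S, x ∈ s)
    {T : Finset {s : Finset X // s ∈ S}} {D : Finset X}
    {I : Finset (X ⊕ {s : Finset X // s ∈ S} ⊕ Unit)}
    (hT : ∀ s ∈ T, Sum.inr (Sum.inl s) ∈ I) (hD : ∀ x ∈ D, Sum.inl x ∈ I) :
    #T + 2 * #D ≤ ∑ v ∈ I, (CoverGraph S).dist (Sum.inr (Sum.inr ())) v := by
  have hsub : D.disjSum (T.disjSum ∅) ⊆ I := by
    rintro (x | s | ⟨⟩) hv <;> simp_all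
  calc #T + 2 * #D
      ≤ ∑ s ∈ T, (CoverGraph S).dist (Sum.inr (Sum.inr ())) (Sum.inr (Sum.inl s)) +
        ∑ x ∈ D, (CoverGraph S).dist (Sum.inr (Sum.inr ())) (Sum.inl x) := by
        gcongr
        · simp [dist_root_set]
        · simpa [mul_comm] using card_nsmul_le_sum D _ 2 fun x _ ↦
            (two_le_dist_inl hcov (by simp) (by simp)).trans_eq dist_comm
    _ = ∑ v ∈ D.disjSum (T.disjSum ∅), (CoverGraph S).dist (Sum.inr (Sum.inr ())) v := by
        simp [sum_disjSum, add_comm]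
    _ ≤ _ := sum_le_sum_of_subset hsub

lemma exists_choice_of_covering_sets (hcov : ∀ x : X, ∃ s ∈ S, x ∈ s)
    (f : X → X ⊕ {s : Finset X // s ∈ S} ⊕ Unit) :
    ∃ g : X → {s : Finset X // s ∈ S}, (∀ x, x ∈ (g x).1) ∧
      ∀ x s, f x = Sum.inr (Sum.inl s) → x ∈ s.1 → g x = s := by
  have (x : X) : ∃ t : {s : Finset X // s ∈ S}, x ∈ t.1 ∧
      ∀ s, f x = Sum.inr (Sum.inl s) → x ∈ s.1 → t = s := by
    by_cases h : ∃ s, f x = Sum.inr (Sum.inl s) ∧ x ∈ s.1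
    · obtain ⟨t, hft, hxt⟩ := h
      exact ⟨t, hxt, fun s hfs _ ↦ by simpa [hft] using hfs⟩
    · obtain ⟨t, ht, hxt⟩ := hcov x
      exact ⟨⟨t, ht⟩, hxt, fun s hfs hxs ↦ (h ⟨s, hfs, hxs⟩).elim⟩
  choose g hg using this
  exact ⟨g, fun x ↦ (hg x).1, fun x ↦ (hg x).2⟩

lemma two_mul_card_le_sum_dist_inl [Fintype X] [DecidableEq X]
    (hcov : ∀ x : X, ∃ s ∈ S, x ∈ s) (f : X → X ⊕ {s : Finset X // s ∈ S} ⊕ Unit)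
    (g : X → {s : Finset X // s ∈ S}) (hg_mem : ∀ x, x ∈ (g x).1)
    (hg_eq : ∀ x s, f x = Sum.inr (Sum.inl s) → x ∈ s.1 → g x = s) :
    2 * Fintype.card X ≤ ∑ x, (CoverGraph S).dist (Sum.inl x) (f x) +
      #{x | f x = Sum.inr (Sum.inl (g x))} + 2 * #{x | f x = Sum.inl x} := by
  have pointwise (x : X) : 2 ≤ (CoverGraph S).dist (Sum.inl x) (f x) +
      (if f x = Sum.inr (Sum.inl (g x)) then 1 else 0) +
      2 * (if f x = Sum.inl x then 1 else 0) := by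
    by_cases hx : f x = Sum.inl x
    · simp [hx]
    by_cases hgx : f x = Sum.inr (Sum.inl (g x))
    · simp [hgx, dist_inl_set (hg_mem x)]
    have := two_le_dist_inl hcov hx fun s hs hxs ↦ hgx (by rw [hs, hg_eq x s hs hxs])
    omega
  calc 2 * Fintype.card X = ∑ _x : X, 2 := by simp [mul_comm]
    _ ≤ _ := sum_le_sum fun x _ ↦ pointwise x
    _ = _ := by simp only [sum_add_distrib, ← mul_sum, ← card_filter]

theorem exists_cover_card_add_le [Fintype X] [DecidableEq X]
    (hcov : ∀ x : X, ∃ s ∈ S, x ∈ s) (f : X → X ⊕ {s : Finset X // s ∈ S} ⊕ Unit) :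
    ∃ S' ⊆ S, (∀ x : X, ∃ s ∈ S', x ∈ s) ∧
      Fintype.card X + #S' ≤ ∑ x, (CoverGraph S).dist (Sum.inl x) (f x) +
        ∑ v ∈ univ.image f, (CoverGraph S).dist (Sum.inr (Sum.inr ())) v := by
  obtain ⟨g, hg_mem, hg_eq⟩ := exists_choice_of_covering_sets hcov f
  set A : Finset X := {x | f x = Sum.inr (Sum.inl (g x))}
  set D : Finset X := {x | f x = Sum.inl x}
  refine ⟨(univ.image g).image Subtype.val, fun s hs ↦ ?_, fun x ↦ ?_, ?_⟩
  · obtain ⟨t, -, rfl⟩ := mem_image.1 hs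
    exact t.2
  · exact ⟨g x, mem_image_of_mem _ (mem_image_of_mem _ (mem_univ x)), hg_mem x⟩
  have h_card : #((univ.image g).image Subtype.val) ≤ #(A.image g) + #Aᶜ :=
    calc _ ≤ #(univ.image g) := card_image_le
      _ = #(A.image g ∪ Aᶜ.image g) := by rw [← image_union, union_compl]
      _ ≤ #(A.image g) + #(Aᶜ.image g) := card_union_le _ _
      _ ≤ _ := by grw [card_image_le (s := Aᶜ)]
  have h_root : #(A.image g) + 2 * #D ≤
      ∑ v ∈ univ.image f, (CoverGraph S).dist (Sum.inr (Sum.inr ())) v := by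
    refine card_add_two_mul_card_le_sum_dist_root hcov (fun s hs ↦ ?_) (fun x hx ↦ ?_)
    · obtain ⟨x, hx, rfl⟩ := mem_image.1 hs
      exact mem_image.2 ⟨x, mem_univ x, (mem_filter.1 hx).2⟩
    · exact mem_image.2 ⟨x, mem_univ x, (mem_filter.1 hx).2⟩
  have h_inl : 2 * Fintype.card X ≤ ∑ x, (CoverGraph S).dist (Sum.inl x) (f x) + #A + 2 * #D :=
    two_mul_card_le_sum_dist_inl hcov f g hg_mem hg_eq
  have h_split : #A + #Aᶜ = Fintype.card X := card_add_card_compl A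
  omega

theorem exists_assignment_of_cover [Fintype X] {S' : Finset (Finset X)} (hS' : S' ⊆ S)
    (hcov' : ∀ x : X, ∃ s ∈ S', x ∈ s) :
    ∃ (E₁ : X → X ⊕ {s : Finset X // s ∈ S} ⊕ Unit)
      (E₂ : {s : Finset X // s ∈ S} → X ⊕ {s : Finset X // s ∈ S} ⊕ Unit),
      Set.range E₁ ⊆ Set.range E₂ ∧
      ∑ x, (CoverGraph S).dist (Sum.inl x) (E₁ x) +
        ∑ s, (CoverGraph S).dist (Sum.inr (Sum.inr ())) (E₂ s) ≤ Fintype.card X + #S' := by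
  classical
  choose σ hσS' hσmem using hcov'
  refine ⟨fun x ↦ Sum.inr (Sum.inl ⟨σ x, hS' (hσS' x)⟩),
    fun s ↦ if s.1 ∈ S' then Sum.inr (Sum.inl s) else Sum.inr (Sum.inr ()), ?_, ?_⟩
  · rintro _ ⟨x, rfl⟩
    exact ⟨⟨σ x, hS' (hσS' x)⟩, by simp [hσS' x]⟩
  gcongr
  · simp [dist_inl_set, hσmem]
  · calc _ = #{s : {s : Finset X // s ∈ S} | s.1 ∈ S'} := by
          rw [card_filter]
          exact sum_congr rfl fun s _ ↦ by by_cases h : s.1 ∈ S' <;> simp [h, dist_root_set]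
      _ ≤ #S' := card_le_card_of_injOn Subtype.val (fun s hs ↦ (mem_filter.1 hs).2)
          Subtype.val_injective.injOn

end CoverGraph

theorem stmt_14_general {X : Type*} [Fintype X] [DecidableEq X]
    (S : Finset (Finset X))
    (hcov : ∀ x : X, ∃ s ∈ S, x ∈ s) (p : ℕ) :
    (∃ (E₁ : X → X ⊕ {s : Finset X // s ∈ S} ⊕ Unit)
       (E₂ : {s : Finset X // s ∈ S} → X ⊕ {s : Finset X // s ∈ S} ⊕ Unit),
      (∀ v, (∃ x, E₁ x = v) → ∃ s, E₂ s = v) ∧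
      (∑ x : X, (CoverGraph S).dist (Sum.inl x) (E₁ x)) +
        (∑ s : {s : Finset X // s ∈ S},
          (CoverGraph S).dist (Sum.inr (Sum.inr ())) (E₂ s)) ≤
        Fintype.card X + p) ↔
    (∃ S' ⊆ S, (∀ x : X, ∃ s ∈ S', x ∈ s) ∧ S'.card ≤ p) := by
  constructor
  · rintro ⟨E₁, E₂, hinc, hcost⟩
    obtain ⟨S', hS', hcov', hcard⟩ := CoverGraph.exists_cover_card_add_le hcov E₁
    have := sum_image_le_sum_of_range_subset ((CoverGraph S).dist (Sum.inr (Sum.inr ()))) hinc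
    exact ⟨S', hS', hcov', by omega⟩
  · rintro ⟨S', hS', hcov', hcard⟩
    obtain ⟨E₁, E₂, hinc, hcost⟩ := CoverGraph.exists_assignment_of_cover hS' hcov'
    exact ⟨E₁, E₂, hinc, by omega⟩

/-- Cost correspondence in the PTAS reduction from minimum set cover by 3-sets: there
is an assignment `E = (E₁, E₂)` satisfying the inclusion constraint `A₁ ⊑ A₂` with
total movement cost at most `m + p` iff `X` has a cover by at most `p` members of `S`. -/
theorem stmt_14 {X : Type*} [Fintype X] [DecidableEq X]
    (S : Finset (Finset X)) (hS3 : ∀ s ∈ S, s.card = 3)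
    (hcov : ∀ x : X, ∃ s ∈ S, x ∈ s) (p : ℕ) :
    (∃ (E₁ : X → X ⊕ {s : Finset X // s ∈ S} ⊕ Unit)
       (E₂ : {s : Finset X // s ∈ S} → X ⊕ {s : Finset X // s ∈ S} ⊕ Unit),
      (∀ v, (∃ x, E₁ x = v) → ∃ s, E₂ s = v) ∧
      (∑ x : X, (CoverGraph S).dist (Sum.inl x) (E₁ x)) +
        (∑ s : {s : Finset X // s ∈ S},
          (CoverGraph S).dist (Sum.inr (Sum.inr ())) (E₂ s)) ≤
        Fintype.card X + p) ↔
    (∃ S' ⊆ S, (∀ x : X, ∃ s ∈ S', x ∈ s) ∧ S'.card ≤ p) :=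
  stmt_14_general S hcov p
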